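/- arXiv:0911.4619 — 5 statements merged into one kernel-verified Lean document; each statement's English description precedes it below -/
import Mathlib

section
/- In ℝⁿ with the Euclidean distance, fix x ∈ ℝⁿ and a unit vector u. Let μ_{x,u} be the filter generated by the sets V⁺(x,u,ε,σ) = { y ≠ x : dist(y − x, [0,ε]u) < σ‖y−x‖ } for ε > 0, σ ∈ (0,1). Then a sequence (x_h) with x_h ≠ x for all h converges to μ_{x,u} (i.e., every generating set V⁺(x,u,ε,σ) eventually contains x_h) if and only if x_h → x and (x_h − x)/‖x_h − x‖ → u. -/
open Filter

lemma factor_norm {n : ℕ} (v u : EuclideanSpace ℝ (Fin n)) (hv : v ≠ 0) :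
    ‖v - ‖v‖ • u‖ = ‖v‖ * ‖‖v‖⁻¹ • v - u‖ := by
  have h0 : ‖v‖ ≠ 0 := norm_ne_zero_iff.mpr hv
  have : v - ‖v‖ • u = ‖v‖ • (‖v‖⁻¹ • v - u) := by
    rw [smul_sub, smul_inv_smul₀ h0]
  rw [this, norm_smul, Real.norm_eq_abs, abs_of_nonneg (norm_nonneg v)]

/-- characterization of convergence of a sequence to the
directional filter μ_{x,u} in Euclidean space. -/
theorem converge_to_directional_filter {n : ℕ}
    (x₀ u : EuclideanSpace ℝ (Fin n)) (hu : ‖u‖ = 1)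
    (xs : ℕ → EuclideanSpace ℝ (Fin n)) (hne : ∀ h, xs h ≠ x₀) :
    (∀ ε > (0:ℝ), ∀ σ ∈ Set.Ioo (0:ℝ) 1,
      ∀ᶠ h in atTop, xs h ≠ x₀ ∧
        Metric.infDist (xs h - x₀) ((fun t : ℝ => t • u) '' Set.Icc 0 ε)
          < σ * ‖xs h - x₀‖)
    ↔
    (Tendsto xs atTop (nhds x₀) ∧
      Tendsto (fun h => ‖xs h - x₀‖⁻¹ • (xs h - x₀)) atTop (nhds u)) := by
  have hvne : ∀ h, xs h - x₀ ≠ 0 := fun h => sub_ne_zero.mpr (hne h)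
  have hvpos : ∀ h, 0 < ‖xs h - x₀‖ := fun h => norm_pos_iff.mpr (hvne h)
  constructor
  · intro H
    constructor
    · rw [Metric.tendsto_atTop]
      intro δ hδ
      have h2 : (0:ℝ) < δ / 2 := by linarith
      have hσ : (1/2 : ℝ) ∈ Set.Ioo (0:ℝ) 1 := by norm_num
      obtain ⟨N, hN⟩ := eventually_atTop.mp (H (δ/2) h2 (1/2) hσ)
      refine ⟨N, fun m hm => ?_⟩
      obtain ⟨-, hlt⟩ := hN m hm
      set v := xs m - x₀
      have hnonempty : ((fun t : ℝ => t • u) '' Set.Icc 0 (δ/2)).Nonempty :=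
        ⟨(0:ℝ) • u, ⟨0, ⟨le_refl 0, le_of_lt h2⟩, rfl⟩⟩
      obtain ⟨y, ⟨t, ⟨ht0, ht1⟩, rfl⟩, hy⟩ :=
        (Metric.infDist_lt_iff hnonempty).mp hlt
      have htn : ‖t • u‖ = t := by
        rw [norm_smul, hu, Real.norm_eq_abs, abs_of_nonneg ht0, mul_one]
      have h1 : ‖v‖ ≤ ‖v - t • u‖ + ‖t • u‖ := by
        have := norm_add_le (v - t • u) (t • u); simpa using this
      rw [dist_eq_norm] at hy ⊢
      have : ‖v‖ < 1/2 * ‖v‖ + δ/2 := by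
        calc ‖v‖ ≤ ‖v - t • u‖ + ‖t • u‖ := h1
        _ < 1/2 * ‖v‖ + δ/2 := by rw [htn]; linarith
      linarith [hvpos m]
    · rw [Metric.tendsto_atTop]
      intro δ hδ
      set σ := min (δ/4) (1/2) with hσdef
      have hσ0 : 0 < σ := lt_min (by linarith) (by norm_num)
      have hσδ : σ ≤ δ/4 := min_le_left _ _
      have hσmem : σ ∈ Set.Ioo (0:ℝ) 1 := ⟨hσ0, lt_of_le_of_lt (min_le_right _ _) (by norm_num)⟩
      obtain ⟨N, hN⟩ := eventually_atTop.mp (H 1 one_pos σ hσmem)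
      refine ⟨N, fun m hm => ?_⟩
      obtain ⟨-, hlt⟩ := hN m hm
      set v := xs m - x₀ with hv
      have hnonempty : ((fun t : ℝ => t • u) '' Set.Icc 0 (1:ℝ)).Nonempty :=
        ⟨(0:ℝ) • u, ⟨0, ⟨le_refl 0, by norm_num⟩, rfl⟩⟩
      obtain ⟨y, ⟨t, ⟨ht0, ht1⟩, rfl⟩, hy⟩ :=
        (Metric.infDist_lt_iff hnonempty).mp hlt
      rw [dist_eq_norm] at hy
      have htn : ‖t • u‖ = t := by
        rw [norm_smul, hu, Real.norm_eq_abs, abs_of_nonneg ht0, mul_one]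
      have habs : |‖v‖ - t| ≤ ‖v - t • u‖ := by
        have := abs_norm_sub_norm_le v (t • u); rwa [htn] at this
      have hkey : ‖v - ‖v‖ • u‖ < 2 * σ * ‖v‖ := by
        have h2 : ‖v - ‖v‖ • u‖ ≤ ‖v - t • u‖ + ‖t • u - ‖v‖ • u‖ := by
          have := norm_sub_le_norm_sub_add_norm_sub v (t • u) (‖v‖ • u)
          exact this
        have h3 : ‖t • u - ‖v‖ • u‖ = |t - ‖v‖| := by
          rw [← sub_smul, norm_smul, hu, Real.norm_eq_abs, mul_one]
        have h4 : |t - ‖v‖| ≤ ‖v - t • u‖ := by rw [abs_sub_comm]; exact habs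
        calc ‖v - ‖v‖ • u‖ ≤ ‖v - t • u‖ + |t - ‖v‖| := by rw [← h3]; exact h2
        _ ≤ 2 * ‖v - t • u‖ := by linarith
        _ < 2 * (σ * ‖v‖) := by linarith
        _ = 2 * σ * ‖v‖ := by ring
      rw [dist_eq_norm]
      have hfac := factor_norm v u (hvne m)
      have hvp := hvpos m
      have : ‖v‖ * ‖‖v‖⁻¹ • v - u‖ < 2 * σ * ‖v‖ := hfac ▸ hkey
      have h5 : ‖‖v‖⁻¹ • v - u‖ < 2 * σ := by
        by_contra hcon
        push_neg at hcon
        nlinarith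
      calc ‖‖v‖⁻¹ • v - u‖ < 2 * σ := h5
      _ ≤ δ/2 := by linarith
      _ < δ := by linarith
  · rintro ⟨hx, hd⟩ ε hε σ ⟨hσ0, hσ1⟩
    have h1 : ∀ᶠ h in atTop, ‖xs h - x₀‖ < ε := by
      have := Metric.tendsto_atTop.mp hx ε hε
      obtain ⟨N, hN⟩ := this
      exact eventually_atTop.mpr ⟨N, fun m hm => by
        have := hN m hm; rwa [dist_eq_norm] at this⟩
    have h2 : ∀ᶠ h in atTop, ‖‖xs h - x₀‖⁻¹ • (xs h - x₀) - u‖ < σ := by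
      have := Metric.tendsto_atTop.mp hd σ hσ0
      obtain ⟨N, hN⟩ := this
      exact eventually_atTop.mpr ⟨N, fun m hm => by
        have := hN m hm; rwa [dist_eq_norm] at this⟩
    filter_upwards [h1, h2] with m hm1 hm2
    refine ⟨hne m, ?_⟩
    set v := xs m - x₀ with hv
    have hmem : ‖v‖ • u ∈ (fun t : ℝ => t • u) '' Set.Icc 0 ε :=
      ⟨‖v‖, ⟨norm_nonneg v, le_of_lt hm1⟩, rfl⟩
    calc Metric.infDist v ((fun t : ℝ => t • u) '' Set.Icc 0 ε)
        ≤ dist v (‖v‖ • u) := Metric.infDist_le_dist_of_mem hmem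
      _ = ‖v‖ * ‖‖v‖⁻¹ • v - u‖ := by rw [dist_eq_norm, factor_norm v u (hvne m)]
      _ < ‖v‖ * σ := by
          exact mul_lt_mul_of_pos_left hm2 (hvpos m)
      _ = σ * ‖v‖ := mul_comm _ _
end

section
/- Let f : ℝⁿ → ℝⁿ be everywhere differentiable with Df(x) invertible for every x. Then f is topologically derivable with respect to the directional refinement: for every x ∈ ℝⁿ and every unit vector u, the pushforward f*μ_{x,u} equals μ_{f(x),v}, where v = Df(x)u/‖Df(x)u‖. -/
/-!
Write `A = Df(x)`, so that `f y - f x = A (y - x) + o(‖y - x‖)`. The isomorphism `A` maps the cone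
of direction `u` and aperture `σ` into the cone of direction `A u` and aperture `‖A‖ ‖A⁻¹‖ σ`, and
an error that is small relative to the norm widens the aperture only slightly; hence `f` maps thin
cones at `x` into any prescribed cone at `f x`. Conversely, a point `z` of a thin cone at `f x` is
hit by `f` near `p = x + A⁻¹ (z - f x)`: on a small sphere around `p`, `‖f - z‖` exceeds its value
at `p`, so its minimum over the ball is an interior critical point, where surjectivity of the
derivative forces `f = z`. As `p - x` lies in a thin cone at `x`, so does this preimage. Finally,
`μ_{y,v}` only depends on the direction of `v`.
-/

open Filter

/-- The directional filter μ_{x,u}, generated by the truncated cones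
V⁺(x,u,ε,σ). -/
noncomputable def dirFilter {n : ℕ} (x u : EuclideanSpace ℝ (Fin n)) :
    Filter (EuclideanSpace ℝ (Fin n)) :=
  Filter.generate {V | ∃ ε > (0:ℝ), ∃ σ ∈ Set.Ioo (0:ℝ) 1,
    V = {y | y ≠ x ∧
      Metric.infDist (y - x) ((fun t : ℝ => t • u) '' Set.Icc 0 ε) < σ * ‖y - x‖}}

open Metric Set

section DirCone

variable {E F : Type*} [NormedAddCommGroup E] [NormedSpace ℝ E]
  [NormedAddCommGroup F] [NormedSpace ℝ F]

/-- The cone `V⁺(0, u, ε, σ)`; its condition `y ≠ 0` is implied by the strict inequality. -/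
def dirCone (u : E) (ε σ : ℝ) : Set E :=
  {w | infDist w ((fun t : ℝ => t • u) '' Icc 0 ε) < σ * ‖w‖}

theorem mem_dirCone_iff {u w : E} {ε σ : ℝ} (hε : 0 ≤ ε) :
    w ∈ dirCone u ε σ ↔ ∃ t ∈ Icc 0 ε, ‖w - t • u‖ < σ * ‖w‖ := by
  rw [dirCone, mem_ofPred_eq, infDist_lt_iff ((nonempty_Icc.2 hε).image _), exists_mem_image]
  simp only [dist_eq_norm]

theorem ne_zero_of_mem_dirCone {u w : E} {ε σ : ℝ} (hw : w ∈ dirCone u ε σ) : w ≠ 0 := by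
  rintro rfl
  simpa using infDist_nonneg.trans_lt hw

theorem dirCone_mono {u : E} {ε₁ ε₂ σ₁ σ₂ : ℝ} (hε₁ : 0 ≤ ε₁) (hε : ε₁ ≤ ε₂) (hσ : σ₁ ≤ σ₂) :
    dirCone u ε₁ σ₁ ⊆ dirCone u ε₂ σ₂ := fun w hw =>
  (infDist_le_infDist_of_subset (image_mono (Icc_subset_Icc_right hε))
    ((nonempty_Icc.2 hε₁).image _)).trans_lt
      (hw.trans_le (mul_le_mul_of_nonneg_right hσ (norm_nonneg w)))

theorem dirCone_smul (u : E) {s : ℝ} (hs : 0 < s) (ε σ : ℝ) :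
    dirCone (s • u) ε σ = dirCone u (s * ε) σ := by
  have hseg : (fun t : ℝ => t • s • u) '' Icc 0 ε = (fun t : ℝ => t • u) '' Icc 0 (s * ε) := by
    have hscale : (s * ·) '' Icc 0 ε = Icc 0 (s * ε) := by
      simpa using (OrderIso.mulLeft₀ s hs).image_Icc 0 ε
    rw [← hscale, image_image]
    simp only [smul_smul, mul_comm]
  simp only [dirCone, hseg]

theorem norm_lt_of_mem_dirCone {u w : E} {ε σ : ℝ} (hε : 0 ≤ ε) (hw : w ∈ dirCone u ε σ) :
    (1 - σ) * ‖w‖ < ε * ‖u‖ := by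
  obtain ⟨t, ⟨ht0, htε⟩, ht⟩ := (mem_dirCone_iff hε).1 hw
  have hrev := norm_sub_norm_le w (t • u)
  rw [norm_smul, Real.norm_of_nonneg ht0] at hrev
  nlinarith [mul_le_mul_of_nonneg_right htε (norm_nonneg u)]

theorem mapsTo_dirCone (A : E ≃L[ℝ] F) (u : E) {ε σ : ℝ} (hε : 0 ≤ ε) :
    MapsTo A (dirCone u ε σ)
      (dirCone (A u) ε (‖(A : E →L[ℝ] F)‖ * ‖(A.symm : F →L[ℝ] E)‖ * σ)) := by
  intro w hw
  obtain ⟨t, ht, hwt⟩ := (mem_dirCone_iff hε).1 hw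
  refine (mem_dirCone_iff hε).2 ⟨t, ht, ?_⟩
  have hA : 0 < ‖(A : E →L[ℝ] F)‖ := norm_pos_iff.2 fun h =>
    ne_zero_of_mem_dirCone hw (A.map_eq_zero_iff.1 (by simpa using congrArg (· w) h))
  have hσ : 0 ≤ σ := nonneg_of_mul_nonneg_left ((norm_nonneg _).trans hwt.le)
    (norm_pos_iff.2 (ne_zero_of_mem_dirCone hw))
  calc ‖A w - t • A u‖ = ‖(A : E →L[ℝ] F) (w - t • u)‖ := by simp
    _ ≤ ‖(A : E →L[ℝ] F)‖ * ‖w - t • u‖ := ContinuousLinearMap.le_opNorm _ _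
    _ < ‖(A : E →L[ℝ] F)‖ * (σ * ‖w‖) := mul_lt_mul_of_pos_left hwt hA
    _ ≤ ‖(A : E →L[ℝ] F)‖ * (σ * (‖(A.symm : F →L[ℝ] E)‖ * ‖A w‖)) := by
      gcongr
      simpa using (A.symm : F →L[ℝ] E).le_opNorm (A w)
    _ = _ := by ring

theorem mem_dirCone_of_norm_sub_le {u w w' : E} {ε σ σ' κ : ℝ} (hw' : w' ∈ dirCone u ε σ)
    (hww' : ‖w - w'‖ ≤ κ * ‖w'‖) (hκ : κ < 1) (hσ' : σ + κ ≤ σ' * (1 - κ)) :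
    w ∈ dirCone u ε σ' := by
  have hw'0 : 0 < ‖w'‖ := norm_pos_iff.2 (ne_zero_of_mem_dirCone hw')
  have hdist :=
    infDist_le_infDist_add_dist (s := (fun t : ℝ => t • u) '' Icc 0 ε) (x := w) (y := w')
  rw [dist_eq_norm] at hdist
  have hnorm : (1 - κ) * ‖w'‖ ≤ ‖w‖ := by
    nlinarith [norm_sub_norm_le w' w, norm_sub_rev w' w]
  have hσ'0 : 0 ≤ σ' := by
    have : 0 ≤ σ := nonneg_of_mul_nonneg_left (infDist_nonneg.trans hw'.le) hw'0
    have : 0 ≤ κ := nonneg_of_mul_nonneg_left ((norm_nonneg _).trans hww') hw'0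
    nlinarith
  calc infDist w _ < σ * ‖w'‖ + κ * ‖w'‖ := by linarith [show infDist w' _ < σ * ‖w'‖ from hw']
    _ ≤ σ' * ((1 - κ) * ‖w'‖) := by nlinarith
    _ ≤ σ' * ‖w‖ := mul_le_mul_of_nonneg_left hnorm hσ'0

theorem HasFDerivAt.exists_mapsTo_dirCone {f : E → F} {A : E ≃L[ℝ] F} {x u : E}
    (hf : HasFDerivAt f (A : E →L[ℝ] F) x) (hu : ‖u‖ = 1) {ε' σ' : ℝ} (hε' : 0 < ε')
    (hσ' : σ' ∈ Ioo 0 1) : ∃ ε > 0, ∃ σ ∈ Ioo (0 : ℝ) 1,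
      MapsTo f ((· - x) ⁻¹' dirCone u ε σ) ((· - f x) ⁻¹' dirCone (A u) ε' σ') := by
  obtain ⟨hσ'0, hσ'1⟩ := hσ'
  set a := ‖(A : E →L[ℝ] F)‖
  set c := ‖(A.symm : F →L[ℝ] E)‖
  have hc : 0 ≤ c := norm_nonneg _
  have hac : 0 ≤ a * c := mul_nonneg (norm_nonneg _) hc
  obtain ⟨σ, hσ0, hσ_half, hσ⟩ : ∃ σ > 0, σ ≤ 1 / 2 ∧ a * c * σ ≤ σ' / 2 :=
    ⟨σ' / (2 * (a * c + 1)), by positivity,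
      by rw [div_le_div_iff₀ (by positivity) two_pos]; nlinarith,
      by rw [mul_div_assoc', div_le_div_iff₀ (by positivity) two_pos]; nlinarith⟩
  obtain ⟨δ, hδ0, hδ⟩ : ∃ δ > 0, δ * c ≤ σ' / 4 :=
    ⟨σ' / (4 * (c + 1)), by positivity,
      by rw [div_mul_eq_mul_div, div_le_div_iff₀ (by positivity) four_pos]; nlinarith⟩
  obtain ⟨r, hr, hfr⟩ := Metric.eventually_nhds_iff.1 (hf.isLittleO.def hδ0)
  refine ⟨min ε' (r / 2), by positivity, σ, ⟨hσ0, by linarith⟩, fun y hy => ?_⟩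
  have hε : 0 ≤ min ε' (r / 2) := by positivity
  replace hy : y - x ∈ dirCone u (min ε' (r / 2)) σ := hy
  have hyr : dist y x < r := by
    have := norm_lt_of_mem_dirCone hε hy
    rw [dist_eq_norm]
    nlinarith [min_le_right ε' (r / 2), norm_nonneg (y - x)]
  have herr : ‖(f y - f x) - A (y - x)‖ ≤ σ' / 4 * ‖A (y - x)‖ := calc
    _ ≤ δ * ‖y - x‖ := hfr hyr
    _ ≤ δ * (c * ‖A (y - x)‖) := by
      gcongr; simpa using (A.symm : F →L[ℝ] E).le_opNorm (A (y - x))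
    _ ≤ σ' / 4 * ‖A (y - x)‖ := by rw [← mul_assoc]; gcongr
  have hlin : A (y - x) ∈ dirCone (A u) (min ε' (r / 2)) (a * c * σ) := mapsTo_dirCone A u hε hy
  show f y - f x ∈ dirCone (A u) ε' σ'
  exact dirCone_mono hε (min_le_left _ _) le_rfl
    (mem_dirCone_of_norm_sub_le hlin herr (by linarith) (by nlinarith))

end DirCone

section LocalSurjectivity

variable {E F : Type*} [NormedAddCommGroup E] [NormedSpace ℝ E] [ProperSpace E]
  [NormedAddCommGroup F] [InnerProductSpace ℝ F]
  {f : E → F} {f' : E → E →L[ℝ] F}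

theorem exists_mem_ball_eq_of_lt_on_sphere (hf : ∀ y, HasFDerivAt f (f' y) y)
    (hsurj : ∀ y, Function.Surjective (f' y)) {p : E} {z : F} {ρ : ℝ} (hρ : 0 ≤ ρ)
    (hsphere : ∀ y ∈ sphere p ρ, ‖f p - z‖ < ‖f y - z‖) : ∃ y ∈ ball p ρ, f y = z := by
  have hcont : Continuous fun y => ‖f y - z‖ ^ 2 :=
    ((continuous_iff_continuousAt.2 fun y => (hf y).continuousAt).sub continuous_const).norm.pow 2
  obtain ⟨y, hy, hmin⟩ := (isCompact_closedBall p ρ).exists_isMinOn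
    ⟨p, mem_closedBall_self hρ⟩ hcont.continuousOn
  have hball : y ∈ ball p ρ := by
    refine (mem_closedBall.1 hy).lt_of_ne fun hyρ => ?_
    have hle : ‖f y - z‖ ^ 2 ≤ ‖f p - z‖ ^ 2 := hmin (mem_closedBall_self hρ)
    have hlt := hsphere y (mem_sphere.2 hyρ)
    nlinarith [norm_nonneg (f p - z)]
  have hcrit := (hmin.isLocalMin (closedBall_mem_nhds_of_mem hball)).hasFDerivAt_eq_zero
    ((hf y).sub_const z).norm_sq
  obtain ⟨h, hh⟩ := hsurj y (f y - z)
  have hzero := congrArg (· h) hcrit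
  simp only [smul_apply, ContinuousLinearMap.comp_apply, innerSL_apply_apply,
    hh, zero_apply, smul_eq_zero, inner_self_eq_zero, sub_eq_zero] at hzero
  exact ⟨y, hball, hzero.resolve_left two_ne_zero⟩

theorem exists_eq_near_linear_preimage (hf : ∀ y, HasFDerivAt f (f' y) y)
    (hsurj : ∀ y, Function.Surjective (f' y)) (A : E ≃L[ℝ] F) {x : E} {z : F} {r δ κ : ℝ}
    (happrox : ∀ y, ‖y - x‖ < r → ‖f y - f x - A (y - x)‖ ≤ δ * ‖y - x‖)
    (hκ : κ ∈ Ioc 0 1) (hδ : 3 * ‖(A.symm : F →L[ℝ] E)‖ * δ < κ) (hz : z ≠ f x)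
    (hr : 2 * ‖A.symm (z - f x)‖ < r) :
    ∃ y, dist y (x + A.symm (z - f x)) < κ * ‖A.symm (z - f x)‖ ∧ f y = z := by
  set c := ‖(A.symm : F →L[ℝ] E)‖
  set w := A.symm (z - f x)
  have hw : 0 < ‖w‖ := norm_pos_iff.2 (by simpa [w, sub_eq_zero] using hz)
  have hAw : A w = z - f x := A.apply_symm_apply _
  have hc : ∀ v, ‖v‖ ≤ c * ‖A v‖ := fun v => by simpa using (A.symm : F →L[ℝ] E).le_opNorm (A v)
  have hcenter : ‖f (x + w) - z‖ ≤ δ * ‖w‖ := by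
    have := happrox (x + w) (by simp; linarith)
    simpa [hAw] using this
  have hδ0 : 0 ≤ δ := nonneg_of_mul_nonneg_left ((norm_nonneg _).trans hcenter) hw
  have hc0 : 0 ≤ c := norm_nonneg _
  refine exists_mem_ball_eq_of_lt_on_sphere hf hsurj (mul_nonneg hκ.1.le hw.le) fun y hy => ?_
  rw [mem_sphere, dist_eq_norm] at hy
  have hyx : ‖y - x‖ ≤ (1 + κ) * ‖w‖ := by
    calc ‖y - x‖ = ‖(y - (x + w)) + w‖ := by congr 1; abel
      _ ≤ ‖y - (x + w)‖ + ‖w‖ := norm_add_le _ _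
      _ = (1 + κ) * ‖w‖ := by rw [hy]; ring
  have hlin : ‖A (y - (x + w))‖ ≤ ‖f y - z‖ + δ * ‖y - x‖ := by
    have hsplit : A (y - (x + w)) = (f y - z) - (f y - f x - A (y - x)) := by
      simp only [map_sub, map_add, hAw]; abel
    rw [hsplit]
    exact (norm_sub_le _ _).trans (add_le_add le_rfl (happrox y (by nlinarith [hκ.2])))
  have hfar : κ * ‖w‖ ≤ c * ‖f y - z‖ + c * δ * ((1 + κ) * ‖w‖) := by
    calc κ * ‖w‖ = ‖y - (x + w)‖ := hy.symm
      _ ≤ c * ‖A (y - (x + w))‖ := hc _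
      _ ≤ c * (‖f y - z‖ + δ * ((1 + κ) * ‖w‖)) := by gcongr; exact hlin.trans (by gcongr)
      _ = _ := by ring
  have hgap : c * ‖f (x + w) - z‖ < c * ‖f y - z‖ := by
    have hslack : 0 ≤ c * δ * (1 - κ) * ‖w‖ :=
      mul_nonneg (mul_nonneg (mul_nonneg hc0 hδ0) (sub_nonneg.2 hκ.2)) hw.le
    nlinarith [mul_le_mul_of_nonneg_left hcenter hc0, mul_pos (sub_pos.2 hδ) hw]
  exact lt_of_mul_lt_mul_left hgap hc0

theorem exists_dirCone_subset_image (hf : ∀ y, HasFDerivAt f (f' y) y)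
    (hsurj : ∀ y, Function.Surjective (f' y)) {A : E ≃L[ℝ] F} {x u : E}
    (hA : (A : E →L[ℝ] F) = f' x) (hu : ‖u‖ = 1) {ε σ : ℝ} (hε : 0 < ε) (hσ : σ ∈ Ioo 0 1) :
    ∃ ε' > 0, ∃ σ' ∈ Ioo (0 : ℝ) 1,
      (· - f x) ⁻¹' dirCone (A u) ε' σ' ⊆ f '' ((· - x) ⁻¹' dirCone u ε σ) := by
  obtain ⟨hσ0, hσ1⟩ := hσ
  set a := ‖(A : E →L[ℝ] F)‖
  set c := ‖(A.symm : F →L[ℝ] E)‖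
  have hc : 0 ≤ c := norm_nonneg _
  have hca : 0 ≤ c * a := mul_nonneg hc (norm_nonneg _)
  obtain ⟨σ', hσ'0, hσ'_half, hσ'⟩ : ∃ σ' > 0, σ' ≤ 1 / 2 ∧ c * a * σ' ≤ σ / 2 :=
    ⟨σ / (2 * (c * a + 1)), by positivity,
      by rw [div_le_div_iff₀ (by positivity) two_pos]; nlinarith,
      by rw [mul_div_assoc', div_le_div_iff₀ (by positivity) two_pos]; nlinarith⟩
  obtain ⟨δ, hδ0, hδ⟩ : ∃ δ > 0, 3 * c * δ < σ / 4 :=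
    ⟨σ / (16 * (c + 1)), by positivity,
      by rw [mul_div_assoc', div_lt_div_iff₀ (by positivity) four_pos]; nlinarith⟩
  obtain ⟨r, hr, hfr⟩ := Metric.eventually_nhds_iff.1 ((hA ▸ hf x).isLittleO.def hδ0)
  have happrox : ∀ y, ‖y - x‖ < r → ‖f y - f x - A (y - x)‖ ≤ δ * ‖y - x‖ :=
    fun y hy => hfr (by rwa [dist_eq_norm])
  have hε' : 0 ≤ min ε (r / 4) := by positivity
  refine ⟨min ε (r / 4), by positivity, σ', ⟨hσ'0, by linarith⟩, fun z hz => ?_⟩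
  replace hz : z - f x ∈ dirCone (A u) (min ε (r / 4)) σ' := hz
  have hw : A.symm (z - f x) ∈ dirCone u (min ε (r / 4)) (c * a * σ') := by
    simpa using mapsTo_dirCone A.symm (A u) hε' hz
  have hwr : 2 * ‖A.symm (z - f x)‖ < r := by
    have := norm_lt_of_mem_dirCone hε' hw
    rw [hu] at this
    nlinarith [min_le_right ε (r / 4), norm_nonneg (A.symm (z - f x))]
  obtain ⟨y, hyw, rfl⟩ := exists_eq_near_linear_preimage hf hsurj A happrox
    ⟨by positivity, by linarith⟩ hδ (sub_ne_zero.1 (ne_zero_of_mem_dirCone hz)) hwr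
  refine ⟨y, ?_, rfl⟩
  show y - x ∈ dirCone u ε σ
  have hclose : ‖y - x - A.symm (f y - f x)‖ ≤ σ / 4 * ‖A.symm (f y - f x)‖ := by
    rw [sub_sub, ← dist_eq_norm]; exact hyw.le
  exact dirCone_mono hε' (min_le_left _ _) le_rfl
    (mem_dirCone_of_norm_sub_le hw hclose (by linarith) (by nlinarith))

end LocalSurjectivity

section DirFilter

variable {n : ℕ}

theorem dirFilter_hasBasis (x u : EuclideanSpace ℝ (Fin n)) :
    (dirFilter x u).HasBasis (fun p : ℝ × ℝ => 0 < p.1 ∧ p.2 ∈ Ioo 0 1)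
      (fun p => (· - x) ⁻¹' dirCone u p.1 p.2) := by
  have hgen : {V | ∃ ε > (0 : ℝ), ∃ σ ∈ Ioo (0 : ℝ) 1, V = {y | y ≠ x ∧
      infDist (y - x) ((fun t : ℝ => t • u) '' Icc 0 ε) < σ * ‖y - x‖}} =
      (fun p : ℝ × ℝ => (· - x) ⁻¹' dirCone u p.1 p.2) '' {p | 0 < p.1 ∧ p.2 ∈ Ioo 0 1} := by
    have hcone : ∀ ε σ, {y | y ≠ x ∧ infDist (y - x) ((fun t : ℝ => t • u) '' Icc 0 ε) <
        σ * ‖y - x‖} = (· - x) ⁻¹' dirCone u ε σ := fun ε σ => by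
      ext y
      exact and_iff_right_of_imp fun hy => sub_ne_zero.1 (ne_zero_of_mem_dirCone hy)
    ext V
    simp only [hcone, mem_ofPred_eq, mem_image, Prod.exists]
    aesop
  rw [dirFilter, hgen, generate_eq_biInf, iInf_image]
  refine hasBasis_biInf_principal ?_ ⟨(1, 1 / 2), by norm_num⟩
  rintro ⟨ε₁, σ₁⟩ ⟨hε₁, hσ₁⟩ ⟨ε₂, σ₂⟩ ⟨hε₂, hσ₂⟩
  refine ⟨(min ε₁ ε₂, min σ₁ σ₂), ⟨lt_min hε₁ hε₂, lt_min hσ₁.1 hσ₂.1,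
    (min_le_left _ _).trans_lt hσ₁.2⟩, ?_, ?_⟩ <;>
  exact preimage_mono (dirCone_mono (le_min hε₁.le hε₂.le) (by simp) (by simp))

theorem dirFilter_smul (x u : EuclideanSpace ℝ (Fin n)) {s : ℝ} (hs : 0 < s) :
    dirFilter x (s • u) = dirFilter x u := by
  refine (dirFilter_hasBasis x (s • u)).ext (dirFilter_hasBasis x u) ?_ ?_
  · rintro ⟨ε, σ⟩ ⟨hε, hσ⟩
    refine ⟨(s * ε, σ), ⟨by positivity, hσ⟩, ?_⟩
    simp only [dirCone_smul u hs, subset_refl]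
  · rintro ⟨ε, σ⟩ ⟨hε, hσ⟩
    refine ⟨(ε / s, σ), ⟨by positivity, hσ⟩, ?_⟩
    simp only [dirCone_smul u hs, mul_div_cancel₀ ε hs.ne', subset_refl]

end DirFilter

/-- a differentiable map with everywhere invertible derivative is
topologically derivable: it pushes μ_{x,u} to μ_{f x, Df(x)u/‖Df(x)u‖}. -/
theorem diffeo_topologically_derivable {n : ℕ}
    (f : EuclideanSpace ℝ (Fin n) → EuclideanSpace ℝ (Fin n))
    (f' : EuclideanSpace ℝ (Fin n) →
      EuclideanSpace ℝ (Fin n) →L[ℝ] EuclideanSpace ℝ (Fin n))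
    (hf : ∀ x, HasFDerivAt f (f' x) x)
    (hinv : ∀ x, ∃ g : EuclideanSpace ℝ (Fin n) ≃L[ℝ] EuclideanSpace ℝ (Fin n),
      (g : EuclideanSpace ℝ (Fin n) →L[ℝ] EuclideanSpace ℝ (Fin n)) = f' x)
    (x u : EuclideanSpace ℝ (Fin n)) (hu : ‖u‖ = 1) :
    Filter.map f (dirFilter x u) =
      dirFilter (f x) (‖f' x u‖⁻¹ • f' x u) := by
  have hsurj : ∀ y, Function.Surjective (f' y) := fun y => by
    obtain ⟨g, hg⟩ := hinv y
    exact hg ▸ g.surjective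
  obtain ⟨A, hA⟩ := hinv x
  have hAu : 0 < ‖A u‖⁻¹ := by
    simpa [A.map_eq_zero_iff] using (norm_ne_zero_iff.1 (hu ▸ one_ne_zero : ‖u‖ ≠ 0))
  rw [← hA, ContinuousLinearEquiv.coe_coe, dirFilter_smul _ _ hAu]
  refine ((dirFilter_hasBasis x u).map f).ext (dirFilter_hasBasis (f x) (A u)) ?_ ?_
  · rintro ⟨ε, σ⟩ ⟨hε, hσ⟩
    obtain ⟨ε', hε', σ', hσ', hsub⟩ := exists_dirCone_subset_image hf hsurj hA hu hε hσ
    exact ⟨(ε', σ'), ⟨hε', hσ'⟩, hsub⟩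
  · rintro ⟨ε', σ'⟩ ⟨hε', hσ'⟩
    obtain ⟨ε, hε, σ, hσ, hmaps⟩ := (hA ▸ hf x).exists_mapsTo_dirCone hu hε' hσ'
    exact ⟨(ε, σ), ⟨hε, hσ⟩, hmaps.image_subset⟩
end

section
/- In ℝⁿ, for any two unit vectors u, v, the composition of the filters μ_u and μ_v commutes: μ_u ∘ μ_v = μ_v ∘ μ_u, where the composition of filters on ℝⁿ×ℝⁿ containing the neighborhood filter of the diagonal is defined by (μ∘ν)(U)=1 iff there exist A,B with μ(A)=ν(B)=1 and A∘B ⊆ U, and A∘B = {(x,z) : ∃y, (x,y)∈A, (y,z)∈B}. -/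
/-!
Every generator `V⁺(u, ε, λ)` of `μ_u` is invariant under simultaneous translation of both
coordinates, so every `μ_u` has a basis of translation-invariant relations. For invariant `A` and
`B`, a chain `x -A- y -B- z` is turned into `x -B- x + z - y -A- z` by translating the two links, so
`A ○ B ⊆ B ○ A`; here commutativity of addition is what makes `x + (z - y)` the common point.
-/

/-- The uniform directional filter μ_u on ℝⁿ × ℝⁿ, generated by the sets
V⁺(u,ε,λ). -/
noncomputable def unifDirFilter {n : ℕ} (u : EuclideanSpace ℝ (Fin n)) :
    Filter (EuclideanSpace ℝ (Fin n) × EuclideanSpace ℝ (Fin n)) :=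
  Filter.generate {V | ∃ ε > (0:ℝ), ∃ lam ∈ Set.Ioo (0:ℝ) 1,
    V = {p : EuclideanSpace ℝ (Fin n) × EuclideanSpace ℝ (Fin n) |
      Metric.infDist p.2 ((fun t : ℝ => p.1 + t • u) '' Set.Icc 0 ε)
        < lam * ‖p.1 - p.2‖}}

open Filter

def SetRel.IsTranslationInvariant {G : Type*} [Add G] (S : SetRel G G) : Prop :=
  ∀ x y w : G, (x, y) ∈ S → (x + w, y + w) ∈ S

namespace SetRel.IsTranslationInvariant

variable {G : Type*} [AddCommGroup G] {A B : SetRel G G}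

theorem comp_subset_comp_swap (hA : IsTranslationInvariant A) (hB : IsTranslationInvariant B) :
    A ○ B ⊆ B ○ A := by
  rintro ⟨x, z⟩ ⟨y, hxy, hyz⟩
  refine ⟨x + (z - y), ?_, ?_⟩
  · simpa only [add_sub_cancel, add_comm x (z - y), add_sub_assoc', add_sub_right_comm]
      using hB y z (x - y) hyz
  · simpa only [add_sub_cancel] using hA x y (z - y) hxy

theorem sInter {T : Set (SetRel G G)} (hT : ∀ S ∈ T, IsTranslationInvariant S) :
    IsTranslationInvariant (⋂₀ T) :=
  fun x y w hxy S hS => hT S hS x y w (hxy S hS)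

end SetRel.IsTranslationInvariant

namespace Filter

open SetRel

variable {G : Type*} [AddCommGroup G]

def HasTranslationInvariantBasis (f : Filter (G × G)) : Prop :=
  ∀ A ∈ f, ∃ A' ∈ f, A' ⊆ A ∧ IsTranslationInvariant A'

theorem hasTranslationInvariantBasis_generate {g : Set (SetRel G G)}
    (hg : ∀ S ∈ g, IsTranslationInvariant S) : (generate g).HasTranslationInvariantBasis := by
  intro A hA
  obtain ⟨T, hTg, hT, hTA⟩ := mem_generate_iff.1 hA
  exact ⟨⋂₀ T, (sInter_mem hT).2 fun S hS => GenerateSets.basic (hTg hS), hTA,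
    IsTranslationInvariant.sInter fun S hS => hg S (hTg hS)⟩

theorem HasTranslationInvariantBasis.exists_comp_subset_swap {f g : Filter (G × G)}
    (hf : f.HasTranslationInvariantBasis) (hg : g.HasTranslationInvariantBasis)
    {U : SetRel G G} (hU : ∃ A ∈ f, ∃ B ∈ g, A ○ B ⊆ U) : ∃ B ∈ g, ∃ A ∈ f, B ○ A ⊆ U := by
  obtain ⟨A, hA, B, hB, hABU⟩ := hU
  obtain ⟨A', hA', hA'A, hA'inv⟩ := hf A hA
  obtain ⟨B', hB', hB'B, hB'inv⟩ := hg B hB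
  exact ⟨B', hB', A', hA',
    (hB'inv.comp_subset_comp_swap hA'inv).trans ((comp_subset_comp hA'A hB'B).trans hABU)⟩

end Filter

theorem isTranslationInvariant_infDist_segment_lt {E : Type*} [NormedAddCommGroup E]
    [NormedSpace ℝ E] (u : E) (ε lam : ℝ) :
    SetRel.IsTranslationInvariant {p : E × E |
      Metric.infDist p.2 ((fun t : ℝ => p.1 + t • u) '' Set.Icc 0 ε) < lam * ‖p.1 - p.2‖} := by
  intro x y w hxy
  have hsegment : (fun t : ℝ => x + w + t • u) '' Set.Icc 0 ε
      = (· + w) '' ((fun t : ℝ => x + t • u) '' Set.Icc 0 ε) := by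
    rw [Set.image_image]
    exact Set.image_congr fun t _ => add_right_comm x w (t • u)
  simpa only [Set.mem_ofPred_eq, hsegment, Metric.infDist_image (isometry_add_right w),
    add_sub_add_right_eq_sub] using hxy

theorem unifDirFilter_hasTranslationInvariantBasis {n : ℕ} (u : EuclideanSpace ℝ (Fin n)) :
    (unifDirFilter u).HasTranslationInvariantBasis := by
  refine hasTranslationInvariantBasis_generate ?_
  rintro S ⟨ε, -, lam, -, rfl⟩
  exact isTranslationInvariant_infDist_segment_lt u ε lam

theorem directional_composition_commutes_general {n : ℕ}
    (u v : EuclideanSpace ℝ (Fin n)) :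
    ∀ U : Set (EuclideanSpace ℝ (Fin n) × EuclideanSpace ℝ (Fin n)),
      (∃ A ∈ unifDirFilter u, ∃ B ∈ unifDirFilter v, SetRel.comp A B ⊆ U) ↔
      (∃ A ∈ unifDirFilter v, ∃ B ∈ unifDirFilter u, SetRel.comp A B ⊆ U) := by
  have hμu := unifDirFilter_hasTranslationInvariantBasis u
  have hμv := unifDirFilter_hasTranslationInvariantBasis v
  exact fun _ => ⟨hμu.exists_comp_subset_swap hμv, hμv.exists_comp_subset_swap hμu⟩

/-- the compositions μ_u ∘ μ_v and μ_v ∘ μ_u coincide, where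
(μ∘ν)(U)=1 iff ∃ A ∈ μ, B ∈ ν with A ○ B ⊆ U. -/
theorem directional_composition_commutes {n : ℕ}
    (u v : EuclideanSpace ℝ (Fin n)) (hu : ‖u‖ = 1) (hv : ‖v‖ = 1) :
    ∀ U : Set (EuclideanSpace ℝ (Fin n) × EuclideanSpace ℝ (Fin n)),
      (∃ A ∈ unifDirFilter u, ∃ B ∈ unifDirFilter v, SetRel.comp A B ⊆ U) ↔
      (∃ A ∈ unifDirFilter v, ∃ B ∈ unifDirFilter u, SetRel.comp A B ⊆ U) :=
  directional_composition_commutes_general u v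
end

section
/- Let (X,d) be a metric space, c : [a,b] → X a bi-Lipschitz curve with a < 0 < b and c(0) = x. Suppose limsup_{ε→0} sup{ (d(c(−s),x)+d(c(t),x)) / d(c(−s),c(t)) : s,t ∈ (0,ε) } < +∞. Then the filters ∂⁺c(x) and ∂⁻c(x) are distinct, where ∂⁺c(x) is generated by the sets V⁺(x,c,ε,μ) = {y ∈ X : d(y, c([0,ε])) < μ d(x,y)} and ∂⁻c(x) by V⁻(x,c,ε,μ) = {y : d(y, c([−ε,0])) < μ d(x,y)}, for ε > 0, μ ∈ (0,1). -/
/-- under the non-degeneracy limsup condition, the forward and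
backward filters ∂⁺c(x) and ∂⁻c(x) of a bi-Lipschitz curve are distinct. -/
theorem forward_backward_filters_distinct {X : Type*} [MetricSpace X]
    (a b : ℝ) (ha : a < 0) (hb : 0 < b)
    (c : ℝ → X) (x : X) (hc0 : c 0 = x)
    (L : ℝ) (hL : 1 ≤ L)
    (hbilip : ∀ s ∈ Set.Icc a b, ∀ t ∈ Set.Icc a b,
      (1 / L) * |s - t| ≤ dist (c s) (c t) ∧ dist (c s) (c t) ≤ L * |s - t|)
    (hlimsup : ∃ K : ℝ, ∃ ε₀ > (0:ℝ), ε₀ ≤ min (-a) b ∧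
      ∀ s ∈ Set.Ioo (0:ℝ) ε₀, ∀ t ∈ Set.Ioo (0:ℝ) ε₀,
        dist (c (-s)) x + dist (c t) x ≤ K * dist (c (-s)) (c t)) :
    Filter.generate {V : Set X | ∃ ε > (0:ℝ), ε ≤ b ∧ ∃ μ ∈ Set.Ioo (0:ℝ) 1,
        V = {y | Metric.infDist y (c '' Set.Icc 0 ε) < μ * dist x y}}
    ≠ Filter.generate {V : Set X | ∃ ε > (0:ℝ), ε ≤ -a ∧ ∃ μ ∈ Set.Ioo (0:ℝ) 1,
        V = {y | Metric.infDist y (c '' Set.Icc (-ε) 0) < μ * dist x y}} := by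
  intro heq
  obtain ⟨K, ε₀, hε₀, hε₀ab, hK⟩ := hlimsup
  have hε₀a : ε₀ ≤ -a := le_trans hε₀ab (min_le_left _ _)
  have hε₀b : ε₀ ≤ b := le_trans hε₀ab (min_le_right _ _)
  have hL0 : (0:ℝ) < L := lt_of_lt_of_le one_pos hL
  set K' : ℝ := max K 1 with hK'def
  have hK'1 : (1:ℝ) ≤ K' := le_max_right _ _
  have hK'0 : (0:ℝ) < K' := lt_of_lt_of_le one_pos hK'1
  set μ : ℝ := 1 / (2 * K') with hμdef
  have hμ0 : 0 < μ := by positivity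
  have hμ1 : μ < 1 := by
    rw [hμdef, div_lt_one (by positivity)]
    linarith
  have hmem : ∀ s ∈ Set.Icc (0:ℝ) ε₀, -s ∈ Set.Icc a b := by
    intro s hs
    constructor
    · linarith [hs.2]
    · linarith [hs.1]
  have hdub : ∀ s ∈ Set.Icc (0:ℝ) ε₀, dist x (c (-s)) ≤ L * s := by
    intro s hs
    have h := (hbilip 0 ⟨ha.le, hb.le⟩ (-s) (hmem s hs)).2
    rw [hc0] at h
    have : |(0:ℝ) - (-s)| = s := by rw [abs_of_nonneg] <;> linarith [hs.1]
    rwa [this] at h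
  have hdpos : ∀ s ∈ Set.Ioc (0:ℝ) ε₀, 0 < dist x (c (-s)) := by
    intro s hs
    have h := (hbilip 0 ⟨ha.le, hb.le⟩ (-s) (hmem s ⟨hs.1.le, hs.2⟩)).1
    rw [hc0] at h
    have habs : |(0:ℝ) - (-s)| = s := by rw [abs_of_nonneg] <;> linarith [hs.1]
    rw [habs] at h
    have : 0 < (1/L) * s := mul_pos (by positivity) hs.1
    linarith
  -- the forward generating set with parameters ε₀, μ
  set Vp : Set X := {y | Metric.infDist y (c '' Set.Icc 0 ε₀) < μ * dist x y} with hVp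
  have hVpmem : Vp ∈ Filter.generate {V : Set X | ∃ ε > (0:ℝ), ε ≤ b ∧
      ∃ μ ∈ Set.Ioo (0:ℝ) 1, V = {y | Metric.infDist y (c '' Set.Icc 0 ε) < μ * dist x y}} :=
    Filter.mem_generate_of_mem ⟨ε₀, hε₀, hε₀b, μ, ⟨hμ0, hμ1⟩, rfl⟩
  rw [heq, Filter.mem_generate_iff] at hVpmem
  obtain ⟨T, hTsub, hTfin, hTinter⟩ := hVpmem
  -- every backward generating set eventually contains c (-s) for small s > 0
  have h1 : ∀ W ∈ T, ∀ᶠ s in nhdsWithin (0:ℝ) (Set.Ioi 0), c (-s) ∈ W := by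
    intro W hW
    obtain ⟨ε', hε'pos, _, μ', hμ', hWeq⟩ := hTsub hW
    have hmin : (0:ℝ) < min ε' ε₀ := lt_min hε'pos hε₀
    filter_upwards [Ioo_mem_nhdsGT_of_mem (Set.mem_Ico.2 ⟨le_rfl, hmin⟩)] with s hs
    have hs0 : 0 < s := hs.1
    have hsε' : s < ε' := lt_of_lt_of_le hs.2 (min_le_left _ _)
    have hsε₀ : s < ε₀ := lt_of_lt_of_le hs.2 (min_le_right _ _)
    rw [hWeq]
    have hin : c (-s) ∈ c '' Set.Icc (-ε') 0 :=
      Set.mem_image_of_mem c ⟨by linarith, by linarith⟩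
    have h0 : Metric.infDist (c (-s)) (c '' Set.Icc (-ε') 0) = 0 :=
      Metric.infDist_zero_of_mem hin
    show Metric.infDist (c (-s)) (c '' Set.Icc (-ε') 0) < μ' * dist x (c (-s))
    rw [h0]
    exact mul_pos hμ'.1 (hdpos s ⟨hs0, hsε₀.le⟩)
  -- but eventually c (-s) ∉ Vp
  have hLL : ε₀ / (L * L) ≤ ε₀ := by
    rw [div_le_iff₀ (by positivity)]
    nlinarith [mul_nonneg hε₀.le (mul_nonneg hL0.le hL0.le), sq_nonneg (L - 1)]
  have h2 : ∀ᶠ s in nhdsWithin (0:ℝ) (Set.Ioi 0), c (-s) ∉ Vp := by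
    have hpos : (0:ℝ) < ε₀ / (L * L) := by positivity
    filter_upwards [Ioo_mem_nhdsGT_of_mem (Set.mem_Ico.2 ⟨le_rfl, hpos⟩)] with s hs
    have hs0 : 0 < s := hs.1
    have hsLL : s < ε₀ / (L * L) := hs.2
    have hsε₀ : s < ε₀ := lt_of_lt_of_le hsLL hLL
    rw [hVp]
    simp only [Set.mem_setOf_eq, not_lt]
    have hne : (c '' Set.Icc (0:ℝ) ε₀).Nonempty :=
      ⟨c 0, Set.mem_image_of_mem c ⟨le_rfl, hε₀.le⟩⟩
    refine le_of_not_gt fun hlt => ?_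
    obtain ⟨y, hy, hdy⟩ := (Metric.infDist_lt_iff hne).1 hlt
    refine absurd hdy (not_lt.2 ?_)
    obtain ⟨t, ht, rfl⟩ := hy
    show μ * dist x (c (-s)) ≤ dist (c (-s)) (c t)
    rcases eq_or_lt_of_le ht.1 with h0 | h0
    · -- t = 0
      rw [← h0, hc0, dist_comm]
      exact mul_le_of_le_one_left dist_nonneg hμ1.le
    rcases lt_or_eq_of_le ht.2 with hlt | hrfl
    · -- 0 < t < ε₀ : use the limsup condition
      have hKst := hK s ⟨hs0, hsε₀⟩ t ⟨h0, hlt⟩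
      have hd0 : (0:ℝ) ≤ dist (c (-s)) (c t) := dist_nonneg
      have hKK' : K * dist (c (-s)) (c t) ≤ K' * dist (c (-s)) (c t) :=
        mul_le_mul_of_nonneg_right (le_max_left _ _) hd0
      have hx : dist x (c (-s)) ≤ K' * dist (c (-s)) (c t) := by
        rw [dist_comm]
        have := dist_nonneg (x := c t) (y := x)
        linarith
      have hμK' : μ * K' = 1 / 2 := by
        rw [hμdef]
        field_simp
      calc μ * dist x (c (-s)) ≤ μ * (K' * dist (c (-s)) (c t)) :=
            mul_le_mul_of_nonneg_left hx hμ0.le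
        _ = (μ * K') * dist (c (-s)) (c t) := by ring
        _ = (1/2) * dist (c (-s)) (c t) := by rw [hμK']
        _ ≤ dist (c (-s)) (c t) := by linarith
    · -- t = ε₀ : use bi-Lipschitz lower bound
      subst hrfl
      have hlow := (hbilip (-s) (hmem s ⟨hs0.le, hsε₀.le⟩) t
        ⟨by linarith, by linarith⟩).1
      have habs : |(-s) - t| = s + t := by rw [abs_of_nonpos (by linarith)]; ring
      rw [habs] at hlow
      have hub : dist x (c (-s)) ≤ L * s := hdub s ⟨hs0.le, hsε₀.le⟩
      have hLs : L * s ≤ t / L := by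
        rw [le_div_iff₀ hL0]
        rw [lt_div_iff₀ (by positivity)] at hsLL
        nlinarith
      have htL : t / L ≤ (1/L) * (s + t) := by
        have h' : t / L = (1/L) * t := by ring
        rw [h']
        exact mul_le_mul_of_nonneg_left (by linarith) (by positivity)
      calc μ * dist x (c (-s)) ≤ 1 * dist x (c (-s)) :=
            mul_le_mul_of_nonneg_right hμ1.le dist_nonneg
        _ = dist x (c (-s)) := one_mul _
        _ ≤ L * s := hub
        _ ≤ t / L := hLs
        _ ≤ (1/L) * (s + t) := htL
        _ ≤ dist (c (-s)) (c t) := hlow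
  -- combine
  have h1all : ∀ᶠ s in nhdsWithin (0:ℝ) (Set.Ioi 0), ∀ W ∈ T, c (-s) ∈ W :=
    (Filter.eventually_all_finite hTfin).2 h1
  obtain ⟨s, hsT, hsVp⟩ := (h1all.and h2).exists
  exact hsVp (hTinter (Set.mem_sInter.2 hsT))
end

section
/- Let (X,d), (X',d') be metric spaces with flows, f : X → X' a surjective bi-Lipschitz map, and F a flow on X with F(0,x)=x. Then the pushforward under f² (where f²(x,y)=(f(x),f(y))) of the filter ∂⁺F generated by the sets V⁺(F,ε,μ) = {(x,y) : d(y, F([0,ε],x)) < μ d(x,y)} equals the filter ∂⁺(f*F) generated by V⁺(f*F,ε,μ) on X'×X', where (f*F)(t,x') = f(F(t,f⁻¹(x'))). Concretely: for every ε>0, μ∈(0,1) there exist ε'>0, μ'∈(0,1) with f²(V⁺(F,ε',μ')) ⊆ V⁺(f*F,ε,μ), and conversely. -/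
/-- a surjective bi-Lipschitz map pushes the filter ∂⁺F forward
to ∂⁺(f*F): the generating families refine each other through f². -/
theorem pushforward_flow_filter {X X' : Type*} [MetricSpace X] [MetricSpace X']
    (f : X → X') (g : X' → X)
    (hgf : Function.LeftInverse g f) (hfg : Function.RightInverse g f)
    (L : ℝ) (hL : 1 ≤ L)
    (hf : ∀ x y : X, (1 / L) * dist x y ≤ dist (f x) (f y) ∧
      dist (f x) (f y) ≤ L * dist x y)
    (F : ℝ → X → X) (hF0 : ∀ x, F 0 x = x)
    (G : ℝ → X' → X') (hG : ∀ t x', G t x' = f (F t (g x'))) :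
    -- the pushforward under f² of ∂⁺F equals ∂⁺(f*F)
    (Filter.map (Prod.map f f)
        (Filter.generate {V : Set (X × X) | ∃ ε > (0:ℝ), ∃ μ ∈ Set.Ioo (0:ℝ) 1,
          V = {p | Metric.infDist p.2 ((fun lam => F lam p.1) '' Set.Icc 0 ε)
                < μ * dist p.1 p.2}})
      = Filter.generate {V : Set (X' × X') | ∃ ε > (0:ℝ), ∃ μ ∈ Set.Ioo (0:ℝ) 1,
          V = {q | Metric.infDist q.2 ((fun lam => G lam q.1) '' Set.Icc 0 ε)
                < μ * dist q.1 q.2}}) ∧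
    -- concretely: f² maps some V⁺(F,ε',μ') into each V⁺(f*F,ε,μ)
    (∀ ε > (0:ℝ), ∀ μ ∈ Set.Ioo (0:ℝ) 1, ∃ ε' > (0:ℝ), ∃ μ' ∈ Set.Ioo (0:ℝ) 1,
      (Prod.map f f) '' {p : X × X |
          Metric.infDist p.2 ((fun lam => F lam p.1) '' Set.Icc 0 ε')
            < μ' * dist p.1 p.2}
        ⊆ {q : X' × X' |
            Metric.infDist q.2 ((fun lam => G lam q.1) '' Set.Icc 0 ε)
              < μ * dist q.1 q.2}) ∧
    -- and conversely: each V⁺(f*F,ε,μ) for suitable ε,μ lies in the image of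
    -- a given V⁺(F,ε',μ')
    (∀ ε' > (0:ℝ), ∀ μ' ∈ Set.Ioo (0:ℝ) 1, ∃ ε > (0:ℝ), ∃ μ ∈ Set.Ioo (0:ℝ) 1,
      {q : X' × X' |
          Metric.infDist q.2 ((fun lam => G lam q.1) '' Set.Icc 0 ε)
            < μ * dist q.1 q.2}
        ⊆ (Prod.map f f) '' {p : X × X |
            Metric.infDist p.2 ((fun lam => F lam p.1) '' Set.Icc 0 ε')
              < μ' * dist p.1 p.2}) := by
  have hL0 : (0:ℝ) < L := lt_of_lt_of_le one_pos hL
  have hL2 : (1:ℝ) ≤ L ^ 2 := by nlinarith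
  -- part 2: forward refinement
  have part2 : ∀ ε > (0:ℝ), ∀ μ ∈ Set.Ioo (0:ℝ) 1, ∃ ε' > (0:ℝ), ∃ μ' ∈ Set.Ioo (0:ℝ) 1,
      (Prod.map f f) '' {p : X × X |
          Metric.infDist p.2 ((fun lam => F lam p.1) '' Set.Icc 0 ε')
            < μ' * dist p.1 p.2}
        ⊆ {q : X' × X' |
            Metric.infDist q.2 ((fun lam => G lam q.1) '' Set.Icc 0 ε)
              < μ * dist q.1 q.2} := by
    intro ε hε μ hμ
    refine ⟨ε, hε, μ / L ^ 2, ⟨div_pos hμ.1 (by positivity), lt_of_le_of_lt (div_le_self hμ.1.le hL2) hμ.2⟩, ?_⟩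
    rintro ⟨a, b⟩ ⟨⟨x, y⟩, hp, heq⟩
    simp only [Prod.map, Prod.mk.injEq] at heq
    obtain ⟨rfl, rfl⟩ := heq
    simp only [Set.mem_setOf_eq] at hp ⊢
    have hne : ((fun lam => F lam x) '' Set.Icc 0 ε).Nonempty :=
      ⟨F 0 x, ⟨0, ⟨le_refl 0, hε.le⟩, rfl⟩⟩
    rw [Metric.infDist_lt_iff hne] at hp
    obtain ⟨z, ⟨lam, hlam, rfl⟩, hd⟩ := hp
    have hmem : G lam (f x) ∈ (fun lam => G lam (f x)) '' Set.Icc 0 ε := ⟨lam, hlam, rfl⟩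
    refine lt_of_le_of_lt (Metric.infDist_le_dist_of_mem hmem) ?_
    rw [hG, hgf]
    have h1 := (hf y (F lam x)).2
    have h2 := (hf x y).1
    calc dist (f y) (f (F lam x)) ≤ L * dist y (F lam x) := h1
      _ < L * (μ / L ^ 2 * dist x y) := by
          exact mul_lt_mul_of_pos_left hd hL0
      _ = μ * (1 / L * dist x y) := by field_simp
      _ ≤ μ * dist (f x) (f y) := mul_le_mul_of_nonneg_left h2 hμ.1.le
  -- part 3: converse refinement
  have part3 : ∀ ε' > (0:ℝ), ∀ μ' ∈ Set.Ioo (0:ℝ) 1, ∃ ε > (0:ℝ), ∃ μ ∈ Set.Ioo (0:ℝ) 1,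
      {q : X' × X' |
          Metric.infDist q.2 ((fun lam => G lam q.1) '' Set.Icc 0 ε)
            < μ * dist q.1 q.2}
        ⊆ (Prod.map f f) '' {p : X × X |
            Metric.infDist p.2 ((fun lam => F lam p.1) '' Set.Icc 0 ε')
              < μ' * dist p.1 p.2} := by
    intro ε' hε' μ' hμ'
    refine ⟨ε', hε', μ' / L ^ 2, ⟨div_pos hμ'.1 (by positivity), lt_of_le_of_lt (div_le_self hμ'.1.le hL2) hμ'.2⟩, ?_⟩
    rintro ⟨a, b⟩ hq
    simp only [Set.mem_setOf_eq] at hq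
    set x := g a with hx
    set y := g b with hy
    have hfa : f x = a := hfg a
    have hfb : f y = b := hfg b
    refine ⟨(x, y), ?_, by simp [Prod.map, hfa, hfb]⟩
    simp only [Set.mem_setOf_eq]
    have hne : ((fun lam => G lam a) '' Set.Icc 0 ε').Nonempty :=
      ⟨G 0 a, ⟨0, ⟨le_refl 0, hε'.le⟩, rfl⟩⟩
    rw [Metric.infDist_lt_iff hne] at hq
    obtain ⟨z, ⟨lam, hlam, rfl⟩, hd⟩ := hq
    have hmem : F lam x ∈ (fun lam => F lam x) '' Set.Icc 0 ε' := ⟨lam, hlam, rfl⟩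
    refine lt_of_le_of_lt (Metric.infDist_le_dist_of_mem hmem) ?_
    have hGl : G lam a = f (F lam x) := by rw [hG]
    have h1 := (hf y (F lam x)).1
    have h2 := (hf x y).2
    simp only [hGl] at hd
    rw [← hfa, ← hfb] at hd
    calc dist y (F lam x) = L * (1 / L * dist y (F lam x)) := by field_simp
      _ ≤ L * dist (f y) (f (F lam x)) := mul_le_mul_of_nonneg_left h1 hL0.le
      _ < L * (μ' / L ^ 2 * dist (f x) (f y)) := mul_lt_mul_of_pos_left hd hL0
      _ = μ' / L * dist (f x) (f y) := by field_simp
      _ ≤ μ' / L * (L * dist x y) := by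
          apply mul_le_mul_of_nonneg_left h2 (div_nonneg hμ'.1.le hL0.le)
      _ = μ' * dist x y := by field_simp
  refine ⟨?_, part2, part3⟩
  apply le_antisymm
  · rw [Filter.le_generate_iff]
    rintro V' ⟨ε, hε, μ, hμ, rfl⟩
    rw [Filter.mem_sets, Filter.mem_map]
    obtain ⟨ε', hε', μ', hμ', hsub⟩ := part2 ε hε μ hμ
    exact Filter.mem_of_superset (Filter.mem_generate_of_mem ⟨ε', hε', μ', hμ', rfl⟩)
      (Set.image_subset_iff.mp hsub)
  · have h1 : Filter.map (Prod.map g g)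
        (Filter.generate {V : Set (X' × X') | ∃ ε > (0:ℝ), ∃ μ ∈ Set.Ioo (0:ℝ) 1,
          V = {q | Metric.infDist q.2 ((fun lam => G lam q.1) '' Set.Icc 0 ε)
                < μ * dist q.1 q.2}})
        ≤ Filter.generate {V : Set (X × X) | ∃ ε > (0:ℝ), ∃ μ ∈ Set.Ioo (0:ℝ) 1,
          V = {p | Metric.infDist p.2 ((fun lam => F lam p.1) '' Set.Icc 0 ε)
                < μ * dist p.1 p.2}} := by
      rw [Filter.le_generate_iff]
      rintro V ⟨ε', hε', μ', hμ', rfl⟩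
      rw [Filter.mem_sets, Filter.mem_map]
      obtain ⟨ε, hε, μ, hμ, hsub⟩ := part3 ε' hε' μ' hμ'
      refine Filter.mem_of_superset (Filter.mem_generate_of_mem ⟨ε, hε, μ, hμ, rfl⟩) ?_
      intro q hq
      obtain ⟨p, hp, rfl⟩ := hsub hq
      simpa [Prod.map, hgf _] using hp
    calc Filter.generate {V : Set (X' × X') | ∃ ε > (0:ℝ), ∃ μ ∈ Set.Ioo (0:ℝ) 1,
          V = {q | Metric.infDist q.2 ((fun lam => G lam q.1) '' Set.Icc 0 ε)
                < μ * dist q.1 q.2}}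
        = Filter.map (Prod.map f f) (Filter.map (Prod.map g g)
            (Filter.generate {V : Set (X' × X') | ∃ ε > (0:ℝ), ∃ μ ∈ Set.Ioo (0:ℝ) 1,
              V = {q | Metric.infDist q.2 ((fun lam => G lam q.1) '' Set.Icc 0 ε)
                    < μ * dist q.1 q.2}})) := by
          rw [Filter.map_map]
          have : (Prod.map f f ∘ Prod.map g g) = id := by
            funext q; simp [Prod.map, hfg _]
          rw [this, Filter.map_id]
      _ ≤ _ := Filter.map_mono h1
end
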